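/- Fix α > 1, let δ = ⌈2·(α + 1)²/(2α + 1)⌉, and for an integer m with m ≥ 3·⌈α + 1⌉ define m''' = ⌊m/(α + 1)⌋ + 1, m* = m − m''', m'' = ⌊m*/(α + 1)⌋ + 1, and m' = m* − m''. Then for every integer n with n − δ ≥ 3·⌈α + 1⌉: (a) n/(α + 1) − δ ≤ (n − δ)'''; (b) α·n/(α + 1)² − δ ≤ (n − δ)''; (c) α²·n/(α + 1)² − δ ≤ (n − δ)'. -/

import Mathlib

/-- `m''' = ⌊m/(α+1)⌋ + 1`, the least integer greater than `m/(α+1)`. -/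
noncomputable def nPPP (α : ℝ) (m : ℕ) : ℕ := ⌊(m : ℝ) / (α + 1)⌋₊ + 1

/-- `m* = m − m'''`. -/
noncomputable def nStar (α : ℝ) (m : ℕ) : ℕ := m - nPPP α m

/-- `m'' = ⌊m*/(α+1)⌋ + 1`. -/
noncomputable def nPP (α : ℝ) (m : ℕ) : ℕ := ⌊(nStar α m : ℝ) / (α + 1)⌋₊ + 1

/-- `m' = m* − m''`. -/
noncomputable def nP (α : ℝ) (m : ℕ) : ℕ := nStar α m - nPP α m

/-- `δ = ⌈2(α+1)²/(2α+1)⌉`. -/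
noncomputable def delta (α : ℝ) : ℕ := ⌈2 * (α + 1) ^ 2 / (2 * α + 1)⌉₊

/-!
Write `A = α + 1` and `m = n - δ`, so that `n ≤ m + δ`. From `m/A < m''' ≤ m/A + 1` one gets
`m* ≥ α m/A - 1`, hence `m'' > α m/A² - 1/A` and, using `m'' ≤ m*/A + 1` once more,
`m' ≥ α m*/A - 1 ≥ α² m/A² - α/A - 1`. Replacing `m` by `n - δ` costs `δ(1 - 1/A)`, `δ(1 - α/A²)`
and `δ(1 - α²/A²) = δ(2α + 1)/A²` respectively, and these absorb the additive errors
`0`, `1/A` and `(2α + 1)/A` as soon as `δ ≥ 1`, resp. `δ ≥ A`; the choice of `δ` guarantees `δ ≥ A`.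
-/

lemma Nat.cast_le_cast_tsub_add (a b : ℕ) : (a : ℝ) ≤ ((a - b : ℕ) : ℝ) + b := by
  exact_mod_cast le_tsub_add

section NPrimes

variable {α : ℝ}

lemma div_lt_nPPP (m : ℕ) : (m : ℝ) / (α + 1) < nPPP α m := by
  unfold nPPP
  push_cast
  exact Nat.lt_floor_add_one _

lemma nPPP_le (hα : 0 ≤ α) (m : ℕ) : (nPPP α m : ℝ) ≤ m / (α + 1) + 1 := by
  unfold nPPP
  push_cast
  gcongr
  exact Nat.floor_le (by positivity)

lemma nStar_ge (hα : 0 ≤ α) (m : ℕ) : α * m / (α + 1) - 1 ≤ nStar α m := by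
  calc α * m / (α + 1) - 1 = m - (m / (α + 1) + 1) := by field_simp; ring
    _ ≤ m - nPPP α m := by linarith [nPPP_le hα m]
    _ ≤ nStar α m := sub_le_iff_le_add.2 (Nat.cast_le_cast_tsub_add _ _)

lemma div_lt_nPP (m : ℕ) : (nStar α m : ℝ) / (α + 1) < nPP α m := by
  unfold nPP
  push_cast
  exact Nat.lt_floor_add_one _

lemma nPP_le (hα : 0 ≤ α) (m : ℕ) : (nPP α m : ℝ) ≤ nStar α m / (α + 1) + 1 := by
  unfold nPP
  push_cast
  gcongr
  exact Nat.floor_le (by positivity)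

lemma nPP_gt (hα : 0 ≤ α) (m : ℕ) : α * m / (α + 1) ^ 2 - 1 / (α + 1) < nPP α m := by
  calc α * m / (α + 1) ^ 2 - 1 / (α + 1) = (α * m / (α + 1) - 1) / (α + 1) := by
        field_simp
    _ ≤ nStar α m / (α + 1) := by gcongr; exact nStar_ge hα m
    _ < nPP α m := div_lt_nPP m

lemma nP_ge (hα : 0 ≤ α) (m : ℕ) :
    α ^ 2 * m / (α + 1) ^ 2 - α / (α + 1) - 1 ≤ nP α m := by
  calc α ^ 2 * m / (α + 1) ^ 2 - α / (α + 1) - 1 = α * (α * m / (α + 1) - 1) / (α + 1) - 1 := by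
        field_simp
    _ ≤ α * nStar α m / (α + 1) - 1 := by gcongr; exact nStar_ge hα m
    _ = nStar α m - (nStar α m / (α + 1) + 1) := by field_simp; ring
    _ ≤ nStar α m - nPP α m := by linarith [nPP_le hα m]
    _ ≤ nP α m := sub_le_iff_le_add.2 (Nat.cast_le_cast_tsub_add _ _)

variable (n d : ℕ)

lemma div_sub_le_nPPP (hα : 0 ≤ α) : (n : ℝ) / (α + 1) - d ≤ nPPP α (n - d) := by
  have hA : 1 ≤ α + 1 := by linarith
  have hn := Nat.cast_le_cast_tsub_add n d
  calc (n : ℝ) / (α + 1) - d ≤ ((n - d : ℕ) + d) / (α + 1) - d / (α + 1) := by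
        gcongr; exact div_le_self (by positivity) hA
    _ = ((n - d : ℕ) : ℝ) / (α + 1) := by ring
    _ ≤ nPPP α (n - d) := (div_lt_nPPP _).le

lemma mul_div_sub_le_nPP (hα : 0 ≤ α) (hd : 1 ≤ (d : ℝ)) :
    α * n / (α + 1) ^ 2 - d ≤ nPP α (n - d) := by
  have hA : 0 < α + 1 := by linarith
  have hn := Nat.cast_le_cast_tsub_add n d
  -- `δ (1 - α/A²) ≥ 1/A` because `A² - α - A = α² ≥ 0`
  have absorb : α * d / (α + 1) ^ 2 - d ≤ -(1 / (α + 1)) := by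
    rw [div_sub' (by positivity), neg_div', div_le_div_iff₀ (by positivity) hA]
    nlinarith [mul_nonneg (mul_nonneg hA.le (sub_nonneg.2 hd)) (by nlinarith : 0 ≤ (α + 1) ^ 2 - α),
      mul_nonneg hA.le (sq_nonneg α)]
  calc α * n / (α + 1) ^ 2 - d ≤ α * ((n - d : ℕ) + d) / (α + 1) ^ 2 - d := by gcongr
    _ = α * (n - d : ℕ) / (α + 1) ^ 2 + (α * d / (α + 1) ^ 2 - d) := by ring
    _ ≤ α * (n - d : ℕ) / (α + 1) ^ 2 - 1 / (α + 1) := by linarith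
    _ ≤ nPP α (n - d) := (nPP_gt hα _).le

lemma sq_mul_div_sub_le_nP (hα : 0 ≤ α) (hd : α + 1 ≤ d) :
    α ^ 2 * n / (α + 1) ^ 2 - d ≤ nP α (n - d) := by
  have hA : 0 < α + 1 := by linarith
  have hn := Nat.cast_le_cast_tsub_add n d
  -- `δ (1 - α²/A²) = δ (2α + 1)/A² ≥ (2α + 1)/A = α/A + 1`
  have absorb : α ^ 2 * d / (α + 1) ^ 2 - d ≤ -(α / (α + 1)) - 1 := by
    rw [div_sub' (by positivity), neg_div', div_sub' (by positivity),
      div_le_div_iff₀ (by positivity) hA]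
    nlinarith [mul_nonneg (mul_nonneg hA.le (sub_nonneg.2 hd)) (by positivity : 0 ≤ 2 * α + 1)]
  calc α ^ 2 * n / (α + 1) ^ 2 - d ≤ α ^ 2 * ((n - d : ℕ) + d) / (α + 1) ^ 2 - d := by gcongr
    _ = α ^ 2 * (n - d : ℕ) / (α + 1) ^ 2 + (α ^ 2 * d / (α + 1) ^ 2 - d) := by ring
    _ ≤ α ^ 2 * (n - d : ℕ) / (α + 1) ^ 2 - α / (α + 1) - 1 := by linarith
    _ ≤ nP α (n - d) := nP_ge hα _

end NPrimes

lemma add_one_le_delta {α : ℝ} (hα : 0 < 2 * α + 1) : α + 1 ≤ delta α :=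
  calc α + 1 ≤ 2 * (α + 1) ^ 2 / (2 * α + 1) := by
        rw [le_div_iff₀ hα]; nlinarith
    _ ≤ delta α := Nat.le_ceil _

theorem nprimes_delta_bounds_general (α : ℝ) (hα : 1 < α) (n : ℕ) :
    ((n : ℝ) / (α + 1) - delta α ≤ (nPPP α (n - delta α) : ℝ)) ∧
    (α * (n : ℝ) / (α + 1) ^ 2 - delta α ≤ (nPP α (n - delta α) : ℝ)) ∧
    (α ^ 2 * (n : ℝ) / (α + 1) ^ 2 - delta α ≤ (nP α (n - delta α) : ℝ)) := by
  have hα₀ : 0 ≤ α := by linarith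
  have hδ : α + 1 ≤ delta α := add_one_le_delta (by linarith)
  exact ⟨div_sub_le_nPPP n _ hα₀, mul_div_sub_le_nPP n _ hα₀ (by linarith),
    sq_mul_div_sub_le_nP n _ hα₀ hδ⟩

/-- Claim 15(a,b,c): bounds on `(n−δ)'''`, `(n−δ)''`, `(n−δ)'`. -/
theorem nprimes_delta_bounds (α : ℝ) (hα : 1 < α) (n : ℕ)
    (hn : 3 * ⌈α + 1⌉₊ ≤ n - delta α) :
    ((n : ℝ) / (α + 1) - delta α ≤ (nPPP α (n - delta α) : ℝ)) ∧
    (α * (n : ℝ) / (α + 1) ^ 2 - delta α ≤ (nPP α (n - delta α) : ℝ)) ∧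
    (α ^ 2 * (n : ℝ) / (α + 1) ^ 2 - delta α ≤ (nP α (n - delta α) : ℝ)) :=
  nprimes_delta_bounds_general α hα n
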